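/- Let f : X → Y be a finite surjective morphism of topological spaces in the following sense: f is closed, surjective, with finite fibres, and dim f⁻¹(Z) ≤ dim Z for every closed Z ⊆ Y (where dim denotes Krull/topological dimension). Then for any subset A ⊆ Y, dim f⁻¹(A) ≤ dim A, and dim X = dim Y. -/

import Mathlib

/-!
Sending an irreducible closed set `C ⊆ X` to `f '' C` is strictly monotone. The image of a closed
set is closed; by Zorn's lemma a minimal closed subset of `C` with the same image exists (finite
fibres make images commute with intersections of chains), and minimality forces it to be
irreducible. Hence every irreducible closed `D ⊆ f '' C` lifts into `C`, so chains lift and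
`height (f '' C) ≤ height C`. Now if `C ⊊ C'` had the same image `D`, then
`height D + 1 ≤ height C' ≤ dim f⁻¹(D) ≤ dim D = height D`, impossible as `dim Y` is finite.
Strict monotonicity gives `dim X ≤ dim Y` and passes to the restrictions `f⁻¹(A) → A`, while
lifting chains from all of `Y` (by surjectivity) gives `dim Y ≤ dim X`.
-/

open Set Order Topology TopologicalSpace IrreducibleCloseds Function

theorem Order.height_apply_le_of_lifting {α β : Type*} [PartialOrder α] [Preorder β]
    {φ : α → β} (hlift : ∀ a b, b ≤ φ a → ∃ a' ≤ a, φ a' = b) (a : α) :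
    height (φ a) ≤ height a := by
  suffices h : ∀ n : ℕ, ∀ a, (n : ℕ∞) ≤ height (φ a) → n ≤ height a from
    ENat.forall_natCast_le_iff_le.mp fun n hn => h n a hn
  intro n
  induction n with
  | zero => simp
  | succ n ih =>
    intro a hn
    obtain ⟨p, hlast, hlen⟩ := exists_series_of_le_height (φ a) hn
    have hb : p.eraseLast.last < φ a := hlast ▸ p.eraseLast_last_rel_last (by omega)
    obtain ⟨a', ha'a, hφa'⟩ := hlift a _ hb.le
    have ha' : a' < a := lt_of_le_of_ne ha'a (by rintro rfl; exact hb.ne hφa'.symm)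
    calc ((n + 1 : ℕ) : ℕ∞) = n + 1 := Nat.cast_succ n
      _ ≤ height a' + 1 := by
        gcongr
        exact ih a' (by simpa [hlen, hφa'] using length_le_height_last (p := p.eraseLast))
      _ ≤ height a := height_add_one_le ha'

theorem Set.iInter_image_subset_image_sInter_of_isChain {α β : Type*} {f : α → β}
    (hfib : ∀ y, (f ⁻¹' {y}).Finite) {c : Set (Set α)} (hc : IsChain (· ⊆ ·) c)
    (hne : c.Nonempty) : ⋂ s ∈ c, f '' s ⊆ f '' ⋂₀ c := by
  intro y hy
  rw [mem_iInter₂] at hy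
  have hfin : ((· ∩ f ⁻¹' {y}) '' c).Finite := (hfib y).finite_subsets.subset (by
    rintro _ ⟨s, -, rfl⟩
    exact inter_subset_right)
  obtain ⟨m, hm⟩ := hfin.exists_minimal (hne.image _)
  obtain ⟨s₀, hs₀, rfl⟩ := hm.prop
  have hleast : ∀ s ∈ c, s₀ ∩ f ⁻¹' {y} ⊆ s := fun s hs =>
    (hc.total hs₀ hs).elim (inter_subset_left.trans ·) fun h =>
      (hm.2 (mem_image_of_mem _ hs) (inter_subset_inter_left _ h)).trans inter_subset_left
  obtain ⟨x, hx, rfl⟩ := hy s₀ hs₀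
  exact ⟨x, fun s hs => hleast s hs ⟨hx, rfl⟩, rfl⟩

theorem IsIrreducible.preimage_subtypeVal {X : Type*} [TopologicalSpace X] {S t : Set X}
    (ht : IsIrreducible t) (h : t ⊆ S) : IsIrreducible ((↑) ⁻¹' t : Set S) := by
  have := isIrreducible_iff_irreducibleSpace.mp ht
  convert (IrreducibleSpace.isIrreducible_univ t).image _ (continuous_inclusion h).continuousOn
  rw [image_univ, range_inclusion]
  rfl

namespace TopologicalSpace.IrreducibleCloseds

variable {X Y Z : Type*} [TopologicalSpace X] [TopologicalSpace Y] [TopologicalSpace Z]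

theorem map_comp {g : Y → Z} {f : X → Y} (hg : Continuous g) (hf : Continuous f) :
    map (g ∘ f) (hg.comp hf) = map g hg ∘ map f hf := by
  ext C : 2
  simp [closure_image_closure hg, image_image]

theorem coe_map_of_isClosedMap {f : X → Y} (hf : Continuous f) (hc : IsClosedMap f)
    (C : IrreducibleCloseds X) : (map f hf C : Set Y) = f '' C :=
  (hc _ C.isClosed).closure_eq

end TopologicalSpace.IrreducibleCloseds

section

variable {X Y : Type*} [TopologicalSpace X] [TopologicalSpace Y] {f : X → Y}

theorem height_le_topologicalKrullDim_of_subset {S : Set X} (T : IrreducibleCloseds X)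
    (hT : (T : Set X) ⊆ S) : (height T : WithBot ℕ∞) ≤ topologicalKrullDim S := by
  rw [height_eq_krullDim_Iic]
  let g : Iic T → IrreducibleCloseds S := fun T' =>
    ⟨(↑) ⁻¹' (T' : Set X), T'.1.isIrreducible.preimage_subtypeVal (T'.2.trans hT),
      T'.1.isClosed.preimage continuous_subtype_val⟩
  refine krullDim_le_of_strictMono g (Monotone.strictMono_of_injective
    (fun _ _ h => preimage_mono (f := ((↑) : S → X)) h) fun T₁ T₂ h => ?_)
  have h' : ((↑) ⁻¹' (T₁ : Set X) : Set S) = (↑) ⁻¹' (T₂ : Set X) := congr_arg SetLike.coe h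
  rw [Subtype.preimage_coe_eq_preimage_coe_iff, inter_eq_right.mpr (T₁.2.trans hT),
    inter_eq_right.mpr (T₂.2.trans hT)] at h'
  exact Subtype.ext (SetLike.coe_injective h')

theorem topologicalKrullDim_eq_height (T : IrreducibleCloseds X) :
    topologicalKrullDim (T : Set X) = height T := by
  refine le_antisymm ?_ (height_le_topologicalKrullDim_of_subset T subset_rfl)
  rw [height_eq_krullDim_Iic]
  let g : IrreducibleCloseds (T : Set X) → Iic T := fun C =>
    ⟨map (↑) continuous_subtype_val C, closure_minimal (Subtype.coe_image_subset _ _) T.isClosed⟩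
  exact krullDim_le_of_strictMono g fun _ _ h => map_strictMono_of_isInducing .subtypeVal h

theorem topologicalKrullDim_le_of_strictMono_map (hf : Continuous f)
    (hmap : StrictMono (map f hf)) : topologicalKrullDim X ≤ topologicalKrullDim Y :=
  krullDim_le_of_strictMono _ hmap

theorem topologicalKrullDim_preimage_le_of_strictMono_map (hf : Continuous f)
    (hmap : StrictMono (map f hf)) (A : Set Y) :
    topologicalKrullDim (f ⁻¹' A) ≤ topologicalKrullDim A := by
  have hg : Continuous (A.restrictPreimage f) := hf.restrictPreimage
  have hcomm : map ((↑) : A → Y) continuous_subtype_val ∘ map _ hg =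
      map f hf ∘ map ((↑) : f ⁻¹' A → X) continuous_subtype_val :=
    (map_comp continuous_subtype_val hg).symm.trans (map_comp hf continuous_subtype_val)
  have hcomp : StrictMono (map ((↑) : A → Y) continuous_subtype_val ∘ map _ hg) :=
    hcomm ▸ hmap.comp (map_strictMono_of_isInducing .subtypeVal)
  exact topologicalKrullDim_le_of_strictMono_map hg fun T T' hlt =>
    (map_mono hg hlt.le).lt_of_ne fun h => (hcomp hlt).ne (congr_arg (map _ continuous_subtype_val) h)

theorem IsClosedMap.exists_isIrreducible_image_eq (hc : IsClosedMap f)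
    (hfib : ∀ y, (f ⁻¹' {y}).Finite) {B : Set X} (hB : IsClosed B)
    (hBi : IsIrreducible (f '' B)) :
    ∃ C ⊆ B, IsClosed C ∧ IsIrreducible C ∧ f '' C = f '' B := by
  obtain ⟨C, hCB, hmin⟩ := zorn_superset_nonempty {C | C ⊆ B ∧ IsClosed C ∧ f '' B ⊆ f '' C}
    (fun c hcS hchain ⟨s, hs⟩ => ⟨⋂₀ c, ⟨(sInter_subset_of_mem hs).trans (hcS hs).1,
      isClosed_sInter fun t ht => (hcS ht).2.1,
      (subset_iInter₂ fun t ht => (hcS ht).2.2).trans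
        (iInter_image_subset_image_sInter_of_isChain hfib hchain ⟨s, hs⟩)⟩,
      fun _ => sInter_subset_of_mem⟩) B ⟨subset_rfl, hB, subset_rfl⟩
  obtain ⟨-, hC, hCim⟩ := hmin.prop
  have himage : f '' C = f '' B := (image_mono hCB).antisymm hCim
  have hcover : ∀ z, IsClosed z → f '' B ⊆ f '' (C ∩ z) → C ⊆ z := fun z hz h =>
    (hmin.2 ⟨inter_subset_left.trans hCB, hC.inter hz, h⟩ inter_subset_left).trans
      inter_subset_right
  refine ⟨C, hCB, hC, ⟨image_nonempty.mp (himage ▸ hBi.nonempty), ?_⟩, himage⟩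
  rw [isPreirreducible_iff_isClosed_union_isClosed]
  intro z₁ z₂ hz₁ hz₂ hsub
  have hsplit : f '' B ⊆ f '' (C ∩ z₁) ∪ f '' (C ∩ z₂) := by
    rw [← image_union, ← inter_union_distrib_left, inter_eq_left.mpr hsub, himage]
  exact (isPreirreducible_iff_isClosed_union_isClosed.mp hBi.2 _ _ (hc _ (hC.inter hz₁))
    (hc _ (hC.inter hz₂)) hsplit).imp (hcover z₁ hz₁) (hcover z₂ hz₂)

theorem IsClosedMap.exists_map_eq (hf : Continuous f) (hc : IsClosedMap f)
    (hfib : ∀ y, (f ⁻¹' {y}).Finite) {B : Set X} (hB : IsClosed B) (D : IrreducibleCloseds Y)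
    (hD : (D : Set Y) ⊆ f '' B) :
    ∃ C : IrreducibleCloseds X, (C : Set X) ⊆ B ∧ map f hf C = D := by
  have himage : f '' (B ∩ f ⁻¹' D) = D := by rwa [image_inter_preimage, inter_eq_right]
  obtain ⟨C, hCB, hC, hCi, hCim⟩ :=
    hc.exists_isIrreducible_image_eq hfib (hB.inter (D.isClosed.preimage hf))
      (by rw [himage]; exact D.isIrreducible)
  refine ⟨⟨C, hCi, hC⟩, hCB.trans inter_subset_left, IrreducibleCloseds.ext ?_⟩
  show closure (f '' C) = D
  rw [hCim, himage, D.isClosed.closure_eq]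

theorem IsClosedMap.height_map_le (hf : Continuous f) (hc : IsClosedMap f)
    (hfib : ∀ y, (f ⁻¹' {y}).Finite) (C : IrreducibleCloseds X) :
    height (map f hf C) ≤ height C :=
  height_apply_le_of_lifting (fun C D hD =>
    hc.exists_map_eq hf hfib C.isClosed D (coe_map_of_isClosedMap hf hc C ▸ hD)) C

theorem IsClosedMap.topologicalKrullDim_le_of_surjective (hf : Continuous f)
    (hc : IsClosedMap f) (hfib : ∀ y, (f ⁻¹' {y}).Finite) (hsurj : Surjective f) :
    topologicalKrullDim Y ≤ topologicalKrullDim X := by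
  refine (krullDim_eq_iSup_height (α := IrreducibleCloseds Y)).trans_le (iSup_le fun D => ?_)
  obtain ⟨C, -, rfl⟩ := hc.exists_map_eq hf hfib isClosed_univ D (by simp [hsurj.range_eq])
  exact (WithBot.coe_le_coe.mpr (hc.height_map_le hf hfib C)).trans (height_le_krullDim C)

theorem IsClosedMap.strictMono_map_of_topologicalKrullDim_preimage_le (hf : Continuous f)
    (hc : IsClosedMap f) (hfib : ∀ y, (f ⁻¹' {y}).Finite)
    (hdimY : topologicalKrullDim Y ≠ ⊤)
    (hdim : ∀ Z : Set Y, IsClosed Z → topologicalKrullDim (f ⁻¹' Z) ≤ topologicalKrullDim Z) :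
    StrictMono (map f hf) := by
  refine fun C C' hlt => (map_mono hf hlt.le).lt_of_ne fun heq => ?_
  set D := map f hf C'
  have hCD : height D ≤ height C := heq ▸ hc.height_map_le hf hfib C
  have hDfin : height D ≠ ⊤ := fun h => hdimY <| top_le_iff.mp <| by
    simpa [h, topologicalKrullDim] using height_le_krullDim D
  have hDD : ((height D + 1 : ℕ∞) : WithBot ℕ∞) ≤ height D := calc
    ((height D + 1 : ℕ∞) : WithBot ℕ∞) ≤ height C' :=
        WithBot.coe_le_coe.mpr ((add_le_add_left hCD 1).trans (height_add_one_le hlt))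
    _ ≤ topologicalKrullDim (f ⁻¹' D) :=
        height_le_topologicalKrullDim_of_subset C' (image_subset_iff.mp subset_closure)
    _ ≤ topologicalKrullDim D := hdim D D.isClosed
    _ = height D := topologicalKrullDim_eq_height D
  exact lt_irrefl _ ((ENat.add_one_le_iff hDfin).mp (WithBot.coe_le_coe.mp hDD))

end

theorem dim_preimage_le_of_finite_surjective_general {X Y : Type*} [TopologicalSpace X]
    [TopologicalSpace Y] {f : X → Y} (hcont : Continuous f)
    (hclosed : ∀ C : Set X, IsClosed C → IsClosed (f '' C))
    (hsurj : Function.Surjective f)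
    (hfib : ∀ y : Y, (f ⁻¹' {y}).Finite)
    (hdimY : topologicalKrullDim Y ≠ ⊤)
    (hdim : ∀ Z : Set Y, IsClosed Z →
      topologicalKrullDim (f ⁻¹' Z) ≤ topologicalKrullDim Z) :
    (∀ A : Set Y, topologicalKrullDim (f ⁻¹' A) ≤ topologicalKrullDim A) ∧
      topologicalKrullDim X = topologicalKrullDim Y := by
  have hmap := IsClosedMap.strictMono_map_of_topologicalKrullDim_preimage_le hcont hclosed hfib
    hdimY hdim
  exact ⟨topologicalKrullDim_preimage_le_of_strictMono_map hcont hmap,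
    (topologicalKrullDim_le_of_strictMono_map hcont hmap).antisymm
      (IsClosedMap.topologicalKrullDim_le_of_surjective hcont hclosed hfib hsurj)⟩

/-- A finite surjective morphism (closed, surjective, finite fibres, not
raising dimension of preimages of closed sets) does not raise the dimension of
preimages of arbitrary subsets, and preserves the total dimension. -/
theorem dim_preimage_le_of_finite_surjective {X Y : Type*} [TopologicalSpace X]
    [TopologicalSpace Y] {f : X → Y} (hcont : Continuous f)
    (hclosed : ∀ C : Set X, IsClosed C → IsClosed (f '' C))
    (hsurj : Function.Surjective f)
    (hfib : ∀ y : Y, (f ⁻¹' {y}).Finite)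
    (hdimX : topologicalKrullDim X ≠ ⊤) (hdimY : topologicalKrullDim Y ≠ ⊤)
    (hdim : ∀ Z : Set Y, IsClosed Z →
      topologicalKrullDim (f ⁻¹' Z) ≤ topologicalKrullDim Z) :
    (∀ A : Set Y, topologicalKrullDim (f ⁻¹' A) ≤ topologicalKrullDim A) ∧
      topologicalKrullDim X = topologicalKrullDim Y :=
  dim_preimage_le_of_finite_surjective_general hcont hclosed hsurj hfib hdimY hdim
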